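/- arXiv:2512.10064 — 2 statements merged into one kernel-verified Lean document; each statement's English description precedes it below -/
import Mathlib

section
/- Let X be a topological space with basepoint x₀ such that πₙ(X, x₀) is trivial for every n ≥ 2, and let p : E → X be a covering map with E simply connected and e₀ ∈ E with p(e₀) = x₀. Then E is weakly contractible: πₙ(E, e₀) is trivial for every n ≥ 1. -/
universe u

/-!
A covering map `p : E → X` has the homotopy lifting property, and a lift of a homotopy of maps
out of the connected cube `Iⁿ` that is constant on the boundary in `X` stays constant on the
boundary in `E`. Hence `p` induces injections `πₙ(E, e₀) → πₙ(X, x₀)` for all `n ≥ 1`, so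
`πₙ(E, e₀)` vanishes for `n ≥ 2`; and `π₁(E, e₀)` vanishes because `E` is simply connected.
-/

open scoped Topology Topology.Homotopy unitInterval

namespace GenLoop

variable {N X Y : Type*} [TopologicalSpace X] [TopologicalSpace Y] {x : X}

def map (f : C(X, Y)) (γ : Ω^ N X x) : Ω^ N Y (f x) :=
  ⟨f.comp γ.1, fun y hy => congrArg f (GenLoop.boundary γ y hy)⟩

theorem Homotopic.map {γ γ' : Ω^ N X x} (h : Homotopic γ γ') (f : C(X, Y)) :
    Homotopic (map f γ) (map f γ') :=
  h.comp_continuousMap f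

end GenLoop

def HomotopyGroup.map {N X Y : Type*} [TopologicalSpace X] [TopologicalSpace Y] {x : X}
    (f : C(X, Y)) : HomotopyGroup N X x → HomotopyGroup N Y (f x) :=
  Quotient.map (GenLoop.map f) fun _ _ h => GenLoop.Homotopic.map h f

theorem IsCoveringMap.homotopyGroup_map_injective {N E X : Type*} [Nonempty N]
    [TopologicalSpace E] [TopologicalSpace X] {p : E → X} (hp : IsCoveringMap p) (e : E) :
    Function.Injective (HomotopyGroup.map (N := N) (x := e) ⟨p, hp.continuous⟩) := by
  rintro ⟨γ⟩ ⟨γ'⟩ h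
  have hbd : (0 : I^N) ∈ Cube.boundary N := ⟨Classical.arbitrary N, Or.inl rfl⟩
  have hagree : ∃ y ∈ Cube.boundary N, γ.1 y = γ'.1 y :=
    ⟨0, hbd, (GenLoop.boundary γ 0 hbd).trans (GenLoop.boundary γ' 0 hbd).symm⟩
  exact Quotient.sound ((hp.homotopicRel_iff_comp hagree).mpr (Quotient.exact h))

/-- If all homotopy groups `πₙ(X, x₀)` for `n ≥ 2` are trivial and `p : E → X` is a covering
map with `E` simply connected, then `E` is weakly contractible: all homotopy groups
`πₙ(E, e₀)` for `n ≥ 1` are trivial. -/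
theorem weakly_contractible_of_covering {E X : Type u}
    [TopologicalSpace E] [TopologicalSpace X]
    (x₀ : X) (hX : ∀ n : ℕ, 2 ≤ n → Subsingleton (HomotopyGroup (Fin n) X x₀))
    {p : E → X} (hp : IsCoveringMap p) [SimplyConnectedSpace E]
    (e₀ : E) (he : p e₀ = x₀) :
    ∀ n : ℕ, 1 ≤ n → Subsingleton (HomotopyGroup (Fin n) E e₀) := by
  intro n hn
  obtain rfl | h2 := hn.eq_or_lt
  · exact (homotopyGroupEquivFundamentalGroupOfUnique (Fin 1)).subsingleton
  · subst he
    have : Nonempty (Fin n) := ⟨⟨0, hn⟩⟩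
    have := hX n h2
    exact (hp.homotopyGroup_map_injective e₀).subsingleton
end

section
/- Let X be a connected, locally path-connected topological space and p : E → X a covering map with E simply connected and locally path-connected. Let G be the deck transformation group of p, acting on E by h · e = h(e), and let E ⧸ G be the orbit space with the quotient topology. Then the map E ⧸ G → X induced by p (well-defined since p is constant on orbits) is a homeomorphism. -/
universe u

/-- The group of self-homeomorphisms of a space, under composition
(`g * h` is "`h` first, then `g`"). -/
instance homeomorphGroup (E : Type u) [TopologicalSpace E] : Group (E ≃ₜ E) where
  one := Homeomorph.refl E
  mul g h := h.trans g
  inv := Homeomorph.symm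
  mul_assoc _ _ _ := Homeomorph.ext fun _ => rfl
  one_mul _ := Homeomorph.ext fun _ => rfl
  mul_one _ := Homeomorph.ext fun _ => rfl
  inv_mul_cancel g := Homeomorph.ext g.symm_apply_apply

/-- The deck transformation group of `p : E → X`: the group of homeomorphisms `h` of `E`
satisfying `p ∘ h = p`. -/
def deckGroup {E X : Type u} [TopologicalSpace E] [TopologicalSpace X] (p : E → X) :
    Subgroup (E ≃ₜ E) where
  carrier := {h | ∀ e, p (h e) = p e}
  mul_mem' := fun {g h} hg hh e => (hg (h e)).trans (hh e)
  one_mem' := fun _ => rfl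
  inv_mem' := fun {g} hg e => (hg (g.symm e)).symm.trans (congrArg p (g.apply_symm_apply e))

/-- Deck transformations act on the total space by evaluation. -/
instance deckGroupMulAction {E X : Type u} [TopologicalSpace E] [TopologicalSpace X]
    (p : E → X) : MulAction (deckGroup p) E where
  smul h e := h.1 e
  one_smul _ := rfl
  mul_smul _ _ _ := rfl

/-!
The induced map is continuous, and it is a quotient map because `p` is one: a covering map is
open, and it is surjective onto the connected base since its range is clopen. So it only remains
to see that deck transformations act transitively on the fibres. Given `p e₀ = p e₁`, the lifting
criterion for the simply connected, locally path-connected space `E` lifts `p` itself to maps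
`E → E` exchanging `e₀` and `e₁`; by uniqueness of lifts their composites are the identity, so
they are mutually inverse deck transformations.
-/

open Topology

theorem Topology.IsQuotientMap.isHomeomorph_quotient_lift {E X : Type*} [TopologicalSpace E]
    [TopologicalSpace X] {s : Setoid E} {p : E → X} (hp : IsQuotientMap p)
    (hs : ∀ a b, p a = p b → s a b) (h : ∀ a b, a ≈ b → p a = p b) :
    IsHomeomorph (Quotient.lift p h) := by
  refine isHomeomorph_iff_isQuotientMap_injective.2 ⟨?_, ?_⟩
  · exact IsQuotientMap.of_comp continuous_quot_mk (hp.continuous.quotient_lift h) hp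
  · rintro ⟨a⟩ ⟨b⟩ hab
    exact Quotient.sound (hs a b hab)

namespace IsCoveringMap

variable {E X : Type*} [TopologicalSpace E] [TopologicalSpace X] {p : E → X}

theorem isClosed_range (hp : IsCoveringMap p) : IsClosed (Set.range p) := by
  refine isOpen_compl_iff.1 (isOpen_iff_mem_nhds.2 fun x hx => ?_)
  obtain ⟨-, U, hxU, hU, -, H, -⟩ := hp x
  filter_upwards [hU.mem_nhds hxU] with y hy
  rintro ⟨e, rfl⟩
  exact hx ⟨_, (H ⟨e, hy⟩).2.2⟩

theorem surjective [ConnectedSpace X] [Nonempty E] (hp : IsCoveringMap p) :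
    Function.Surjective p :=
  Set.range_eq_univ.1 <| IsClopen.eq_univ ⟨hp.isClosed_range, hp.isOpenMap.isOpen_range⟩
    (Set.range_nonempty p)

theorem exists_continuous_lift_self [SimplyConnectedSpace E] [LocallyPathConnectedSpace E]
    (hp : IsCoveringMap p) {e₀ e₁ : E} (h : p e₀ = p e₁) :
    ∃ f : C(E, E), f e₀ = e₁ ∧ p ∘ f = p :=
  (hp.existsUnique_continuousMap_lifts ⟨p, hp.continuous⟩ e₀ e₁ h.symm).exists

theorem leftInverse_of_comp_eq [PreconnectedSpace E] (hp : IsCoveringMap p) {f g : C(E, E)}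
    (hf : p ∘ f = p) (hg : p ∘ g = p) {e : E} (he : g (f e) = e) : Function.LeftInverse g f :=
  congrFun <| hp.eq_of_comp_eq (g.comp f).continuous continuous_id
    (funext fun x => (congrFun hg (f x)).trans (congrFun hf x)) e he

end IsCoveringMap

theorem IsCoveringMap.exists_deckGroup_smul_eq {E X : Type u} [TopologicalSpace E]
    [TopologicalSpace X] {p : E → X} [SimplyConnectedSpace E] [LocallyPathConnectedSpace E]
    (hp : IsCoveringMap p)
    {e₀ e₁ : E} (h : p e₀ = p e₁) : ∃ g : deckGroup p, g • e₀ = e₁ := by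
  obtain ⟨f, hf₀, hfp⟩ := hp.exists_continuous_lift_self h
  obtain ⟨g, hg₁, hgp⟩ := hp.exists_continuous_lift_self h.symm
  have hgf := hp.leftInverse_of_comp_eq hfp hgp (e := e₀) (by rw [hf₀, hg₁])
  have hfg := hp.leftInverse_of_comp_eq hgp hfp (e := e₁) (by rw [hg₁, hf₀])
  exact ⟨⟨⟨⟨f, g, hgf, hfg⟩, f.continuous, g.continuous⟩, congrFun hfp⟩, hf₀⟩

/-- For a covering map `p : E → X` with `X` connected and locally path-connected and `E` simply
connected and locally path-connected, the map `E ⧸ G → X` induced by `p` on the orbit space of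
the action of the deck transformation group `G` (with the quotient topology) is a
homeomorphism. -/
theorem orbit_space_of_deckGroup_homeomorph {E X : Type u}
    [TopologicalSpace E] [TopologicalSpace X]
    [ConnectedSpace X]
    {p : E → X} (hp : IsCoveringMap p)
    [SimplyConnectedSpace E] [LocallyPathConnectedSpace E] :
    IsHomeomorph
      (Quotient.lift (s := MulAction.orbitRel (deckGroup p) E) p
        (fun a b h => by obtain ⟨g, rfl⟩ := h; exact g.2 b)) := by
  exact (hp.isQuotientMap hp.surjective).isHomeomorph_quotient_lift
    (fun _ _ hab => hp.exists_deckGroup_smul_eq hab.symm) _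
end
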